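/- Let the machine M be TA-compliant with the Hinke–Schaefer architecture HS and let G = {L_user, L_DBMS, L_F}. If π(p) depends on {H_user, H_DBMS, H_F} actions at α, then M,π,α ⊨ ¬K_G p. -/

import Mathlib

structure Machine (S A D O : Type) where
  s0 : S
  step : S → A → S
  dom : A → D
  obs : D → S → O

namespace Machine

def run {S A D O : Type} (M : Machine S A D O) (α : List A) : S :=
  α.foldl M.step M.s0

end Machine
/-- Elements of a view: actions or (group) observations. -/
inductive VE (A O' : Type) where
  | act : A → VE A O'
  | obs : O' → VE A O'

open Classical in
/-- Absorptive concatenation: `σ ∘ x` is `σ` if `x` equals the last element of `σ`,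
and `σ ++ [x]` otherwise. -/
noncomputable def absorb {X : Type} (σ : List X) (x : X) : List X :=
  if σ.getLast? = some x then σ else σ ++ [x]

open Classical in
/-- View of a group `G`, computed on the reversed action sequence. -/
noncomputable def viewR {S A D O : Type} (M : Machine S A D O) (G : Set D) :
    List A → List (VE A (G → O))
  | [] => [VE.obs (fun u : G => M.obs u.1 M.s0)]
  | a :: ρ =>
    let o : VE A (G → O) := VE.obs (fun u : G => M.obs u.1 (M.run ((a :: ρ).reverse)))
    if M.dom a ∈ G then viewR M G ρ ++ [VE.act a, o] else absorb (viewR M G ρ) o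

/-- The view of group `G` of the action sequence `α`. -/
noncomputable def view {S A D O : Type} (M : Machine S A D O) (G : Set D) (α : List A) :
    List (VE A (G → O)) :=
  viewR M G α.reverse
/-- Values of the `ta` function: nested tuples of actions. -/
inductive TA (A : Type) where
  | eps : TA A
  | node : TA A → TA A → A → TA A

open Classical in
/-- `ta`, computed on the reversed action sequence. -/
noncomputable def taR {A D : Type} (P : D → D → Prop) (dm : A → D) :
    List A → D → TA A
  | [], _ => TA.eps
  | a :: ρ, u =>
    if P (dm a) u then TA.node (taR P dm ρ u) (taR P dm ρ (dm a)) a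
    else taR P dm ρ u

/-- `ta P dm α u` : maximal information domain `u` is permitted to have after `α`. -/
noncomputable def ta {A D : Type} (P : D → D → Prop) (dm : A → D) (α : List A) (u : D) :
    TA A :=
  taR P dm α.reverse u

/-- TA-compliance of a machine with the information-flow policy `P`. -/
def TACompliant {S A D O : Type} (M : Machine S A D O) (P : D → D → Prop) : Prop :=
  ∀ (u : D) (α α' : List A), ta P M.dom α u = ta P M.dom α' u →
    M.obs u (M.run α) = M.obs u (M.run α')
/-- Formulas of the epistemic logic (without distributed knowledge). -/
inductive Formula (PC D : Type) where
  | tru : Formula PC D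
  | atom : PC → Formula PC D
  | neg : Formula PC D → Formula PC D
  | conj : Formula PC D → Formula PC D → Formula PC D
  | know : Set D → Formula PC D → Formula PC D

/-- Satisfaction relation `M,π,α ⊨ φ`. -/
def sat {S A D O PC : Type} (M : Machine S A D O) (π : PC → Set (List A)) :
    List A → Formula PC D → Prop
  | _, .tru => True
  | α, .atom p => α ∈ π p
  | α, .neg φ => ¬ sat M π α φ
  | α, .conj φ ψ => sat M π α φ ∧ sat M π α ψ
  | α, .know G φ => ∀ α', view M G α' = view M G α → sat M π α' φ
open Classical in
/-- `restr dm G α` : subsequence of `α` of actions whose domain lies in `G`. -/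
noncomputable def restr {A D : Type} (dm : A → D) (G : Set D) (α : List A) : List A :=
  α.filter (fun a => decide (dm a ∈ G))

/-- Proposition `X` depends on `G` actions at `α`. -/
def DependsOnActs {A D : Type} (dm : A → D) (G : Set D) (X : Set (List A)) (α : List A) :
    Prop :=
  ∃ β : List A, restr dm Gᶜ α = restr dm Gᶜ β ∧ (α ∈ X ↔ β ∉ X)

/-- The six domains of the Hinke–Schaefer architecture `HS`. -/
inductive HSDom where
  | Huser : HSDom
  | Hdbms : HSDom
  | HF : HSDom
  | Luser : HSDom
  | Ldbms : HSDom
  | LF : HSDom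
deriving DecidableEq

/-- The non-reflexive edges of the Hinke–Schaefer architecture. -/
def HSbase : HSDom → HSDom → Prop := fun u v =>
  (u = HSDom.Huser ∧ v = HSDom.Hdbms) ∨ (u = HSDom.Hdbms ∧ v = HSDom.Huser) ∨
  (u = HSDom.Hdbms ∧ v = HSDom.HF) ∨ (u = HSDom.HF ∧ v = HSDom.Hdbms) ∨
  (u = HSDom.Luser ∧ v = HSDom.Ldbms) ∨ (u = HSDom.Ldbms ∧ v = HSDom.Luser) ∨
  (u = HSDom.Ldbms ∧ v = HSDom.LF) ∨ (u = HSDom.LF ∧ v = HSDom.Ldbms) ∨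
  (u = HSDom.LF ∧ v = HSDom.Hdbms)

/-- The information-flow policy of `HS`: the reflexive closure of `HSbase`. -/
def HSrel : HSDom → HSDom → Prop := fun u v => u = v ∨ HSbase u v

/-!
The low group `L = {L_user, L_DBMS, L_F}` receives no information from the high domains in `HS`,
so under TA-compliance every low observation after `α` is determined by `ta_u(α)`, which only
records the low actions `α↾L`. Hence the view of `L` is a function of `α↾L`. The witness `β` of
dependence has `β↾L = α↾L`, so it is indistinguishable from `α` for `L` while `p` has a different
truth value there; therefore `L` does not know `p` at `α`.
-/

open Classical

def InflowClosed {D : Type} (P : D → D → Prop) (L : Set D) : Prop :=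
  ∀ ⦃d u⦄, P d u → u ∈ L → d ∈ L

section Restr

variable {A D : Type} (dm : A → D) (L : Set D)

theorem restr_append_singleton (α : List A) (a : A) :
    restr dm L (α ++ [a]) = if dm a ∈ L then restr dm L α ++ [a] else restr dm L α := by
  by_cases h : dm a ∈ L <;> simp [restr, List.filter_append, h]

theorem restr_restr (α : List A) : restr dm L (restr dm L α) = restr dm L α := by
  simp [restr, List.filter_filter]

theorem ta_append_singleton (P : D → D → Prop) (α : List A) (a : A) (u : D) :
    ta P dm (α ++ [a]) u =
      if P (dm a) u then TA.node (ta P dm α u) (ta P dm α (dm a)) a else ta P dm α u := by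
  simp [ta, taR]

theorem ta_restr {P : D → D → Prop} (hL : InflowClosed P L) (α : List A) {u : D}
    (hu : u ∈ L) : ta P dm (restr dm L α) u = ta P dm α u := by
  induction α using List.reverseRecOn generalizing u with
  | nil => rfl
  | append_singleton α a ih =>
    rw [restr_append_singleton, ta_append_singleton]
    by_cases ha : dm a ∈ L
    · rw [if_pos ha, ta_append_singleton, ih hu, ih ha]
    · have hflow : ¬ P (dm a) u := fun h => ha (hL h hu)
      rw [if_neg ha, if_neg hflow, ih hu]

end Restr

section View

variable {S A D O : Type} (M : Machine S A D O)

theorem obs_run_eq_of_restr_eq {P : D → D → Prop} (hTA : TACompliant M P) {L : Set D}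
    (hL : InflowClosed P L) {α β : List A} (h : restr M.dom L α = restr M.dom L β) {u : D}
    (hu : u ∈ L) : M.obs u (M.run α) = M.obs u (M.run β) :=
  hTA u α β (by rw [← ta_restr M.dom L hL α hu, h, ta_restr M.dom L hL β hu])

theorem view_append_singleton (G : Set D) (α : List A) (a : A) :
    view M G (α ++ [a]) =
      if M.dom a ∈ G then
        view M G α ++ [VE.act a, VE.obs fun u : G => M.obs u.1 (M.run (α ++ [a]))]
      else absorb (view M G α) (VE.obs fun u : G => M.obs u.1 (M.run (α ++ [a]))) := by
  simp [view, viewR]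

theorem getLast?_view (G : Set D) (α : List A) :
    (view M G α).getLast? = some (VE.obs fun u : G => M.obs u.1 (M.run α)) := by
  induction α using List.reverseRecOn with
  | nil => rfl
  | append_singleton α a _ =>
    rw [view_append_singleton]
    split_ifs
    · simp
    · unfold absorb
      split_ifs with h
      · exact h
      · simp

theorem absorb_view_obs_run (G : Set D) (α : List A) :
    absorb (view M G α) (VE.obs fun u : G => M.obs u.1 (M.run α)) = view M G α :=
  if_pos (getLast?_view M G α)

theorem view_restr {P : D → D → Prop} (hTA : TACompliant M P) {L : Set D}
    (hL : InflowClosed P L) (α : List A) : view M L (restr M.dom L α) = view M L α := by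
  induction α using List.reverseRecOn with
  | nil => rfl
  | append_singleton α a ih =>
    have hobs : ∀ γ, restr M.dom L γ = restr M.dom L (α ++ [a]) →
        (fun u : L => M.obs u.1 (M.run γ)) = fun u : L => M.obs u.1 (M.run (α ++ [a])) :=
      fun γ hγ => funext fun u => obs_run_eq_of_restr_eq M hTA hL hγ u.2
    rw [view_append_singleton M L α a]
    by_cases ha : M.dom a ∈ L
    · have hrestr : restr M.dom L (α ++ [a]) = restr M.dom L α ++ [a] := by
        rw [restr_append_singleton, if_pos ha]
      rw [if_pos ha, hrestr, view_append_singleton, if_pos ha, ih,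
        hobs _ (by rw [restr_append_singleton, if_pos ha, restr_restr, hrestr])]
    · have hrestr : restr M.dom L (α ++ [a]) = restr M.dom L α := by
        rw [restr_append_singleton, if_neg ha]
      rw [if_neg ha, ← hobs α hrestr.symm, absorb_view_obs_run, hrestr, ih]

theorem view_eq_of_restr_eq {P : D → D → Prop} (hTA : TACompliant M P) {L : Set D}
    (hL : InflowClosed P L) {α β : List A} (h : restr M.dom L α = restr M.dom L β) :
    view M L α = view M L β := by
  rw [← view_restr M hTA hL α, h, view_restr M hTA hL β]

theorem sat_neg_know_of_dependsOnActs {PC : Type} {P : D → D → Prop} (hTA : TACompliant M P)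
    {H : Set D} (hL : InflowClosed P Hᶜ) (π : PC → Set (List A)) (p : PC) {α : List A}
    (hdep : DependsOnActs M.dom H (π p) α) :
    sat M π α (Formula.neg (Formula.know Hᶜ (Formula.atom p))) := by
  obtain ⟨β, hrestr, hflip⟩ := hdep
  intro hK
  have hβ : β ∈ π p := hK β (view_eq_of_restr_eq M hTA hL hrestr).symm
  have hα : α ∈ π p := hK α rfl
  exact hflip.mp hα hβ

end View

theorem HSrel_inflowClosed_low :
    InflowClosed HSrel {HSDom.Huser, HSDom.Hdbms, HSDom.HF}ᶜ := by
  intro d u hdu hu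
  cases d <;> cases u <;> simp_all [HSrel, HSbase]

/-- if `M` is TA-compliant with `HS` and `π(p)` depends on
`{H_user, H_DBMS, H_F}` actions at `α`, then `M,π,α ⊨ ¬K_G p` for
`G = {L_user, L_DBMS, L_F}`. -/
theorem statement5 {S A O PC : Type} (M : Machine S A HSDom O)
    (hTA : TACompliant M HSrel) (π : PC → Set (List A)) (p : PC) (α : List A)
    (hdep : DependsOnActs M.dom {HSDom.Huser, HSDom.Hdbms, HSDom.HF} (π p) α) :
    sat M π α (Formula.neg
      (Formula.know {HSDom.Luser, HSDom.Ldbms, HSDom.LF} (Formula.atom p))) := by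
  have hlow : ({HSDom.Luser, HSDom.Ldbms, HSDom.LF} : Set HSDom) =
      {HSDom.Huser, HSDom.Hdbms, HSDom.HF}ᶜ := by
    ext d
    cases d <;> simp
  rw [hlow]
  exact sat_neg_know_of_dependsOnActs M hTA HSrel_inflowClosed_low π p hdep
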